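/- arXiv:0910.4325 — 6 statements merged into one kernel-verified Lean document; each statement's English description precedes it below -/
import Mathlib

section
/- N(n) ≥ ⌊(2n+1)/3⌋ for all positive integers n. -/
/-- The triangle of size `n`: cells `(a,b)` with `1 ≤ b ≤ a ≤ n`. -/
def Triangle (n : ℕ) : Finset (ℕ × ℕ) :=
  (Finset.Icc 1 n ×ˢ Finset.Icc 1 n).filter (fun p => p.2 ≤ p.1)

/-- No two distinct cells share a row (`a`), a column (`b`), or a standard
diagonal (value `a - b`). -/
def NonAttacking (S : Finset (ℕ × ℕ)) : Prop :=
  ∀ p ∈ S, ∀ q ∈ S, p ≠ q →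
    p.1 ≠ q.1 ∧ p.2 ≠ q.2 ∧ (p.1 : ℤ) - p.2 ≠ (q.1 : ℤ) - q.2

/-- `N(n)`: the maximum size of a non-attacking set of cells in the triangle of size `n`. -/
noncomputable def maxDots (n : ℕ) : ℕ :=
  sSup {m : ℕ | ∃ S : Finset (ℕ × ℕ), S ⊆ Triangle n ∧ NonAttacking S ∧ S.card = m}

/-- Auxiliary: the `j`-th dot in the explicit construction. -/
def dotF (n j : ℕ) : ℕ × ℕ :=
  (n - (2*n+1)/3 + 1 + j,
    if j < ((2*n+1)/3)/2 then 2*j+2 else 2*(j - ((2*n+1)/3)/2)+1)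

lemma dotF_injOn (n : ℕ) : Set.InjOn (dotF n) (Finset.range ((2*n+1)/3)) := by
  intro i _ j _ h
  have : (dotF n i).1 = (dotF n j).1 := by rw [h]
  simp only [dotF] at this
  omega

lemma dot_set_bddAbove (n : ℕ) :
    BddAbove {m : ℕ | ∃ S : Finset (ℕ × ℕ), S ⊆ Triangle n ∧ NonAttacking S ∧ S.card = m} := by
  refine ⟨(Triangle n).card, ?_⟩
  rintro m ⟨S, hS, -, rfl⟩
  exact Finset.card_le_card hS

/-- `N(n) ≥ ⌊(2n+1)/3⌋` for all positive integers `n`. -/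
theorem maxDots_lower_bound (n : ℕ) (hn : 1 ≤ n) :
    (2 * n + 1) / 3 ≤ maxDots n := by
  set m := (2 * n + 1) / 3 with hm
  set t := m / 2 with ht
  apply le_csSup (dot_set_bddAbove n)
  refine ⟨(Finset.range m).image (dotF n), ?_, ?_, ?_⟩
  · intro p hp
    simp only [Finset.mem_image, Finset.mem_range] at hp
    obtain ⟨j, hj, rfl⟩ := hp
    simp only [Triangle, Finset.mem_filter, Finset.mem_product, Finset.mem_Icc, dotF]
    have hmn : m ≤ n := by omega
    split <;> refine ⟨⟨⟨?_, ?_⟩, ?_, ?_⟩, ?_⟩ <;> omega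
  · intro p hp q hq hpq
    simp only [Finset.mem_image, Finset.mem_range] at hp hq
    obtain ⟨i, hi, rfl⟩ := hp
    obtain ⟨j, hj, rfl⟩ := hq
    have hij : i ≠ j := by
      rintro rfl; exact hpq rfl
    simp only [dotF]
    refine ⟨by omega, ?_, ?_⟩
    · split <;> split <;> omega
    · split <;> split <;> omega
  · rw [Finset.card_image_of_injOn (dotF_injOn n), Finset.card_range]
end

section
/- For n = 3t+1, define r_i = c_i = max{0, (i−t−1)/(3t+1)} and d_i = max{0, (i−t)/(3t+1)} for 1 ≤ i ≤ n. Then for every triple (i,j,k) with i+j+k = 2n+1 and 1 ≤ i,j,k ≤ n, we have r_i + c_j + d_k ≥ 1. -/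
/-- Dual feasibility for `n = 3t+1`: with `r_i = c_i = max{0,(i-t-1)/(3t+1)}` and
`d_i = max{0,(i-t)/(3t+1)}`, every triple `(i,j,k)` with `i+j+k = 2n+1` and
`1 ≤ i,j,k ≤ n` satisfies `r_i + c_j + d_k ≥ 1`. -/
theorem dual_feasible_one_mod_three (t i j k : ℕ)
    (hi : 1 ≤ i) (hi' : i ≤ 3 * t + 1)
    (hj : 1 ≤ j) (hj' : j ≤ 3 * t + 1)
    (hk : 1 ≤ k) (hk' : k ≤ 3 * t + 1)
    (hsum : i + j + k = 2 * (3 * t + 1) + 1) :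
    1 ≤ max 0 (((i : ℚ) - t - 1) / (3 * t + 1)) +
        max 0 (((j : ℚ) - t - 1) / (3 * t + 1)) +
        max 0 (((k : ℚ) - t) / (3 * t + 1)) := by
  have hpos : (0:ℚ) < 3 * t + 1 := by positivity
  have hs : (i:ℚ) + j + k = 2 * (3 * t + 1) + 1 := by exact_mod_cast hsum
  have hq : ((i:ℚ) - t - 1) / (3 * t + 1) + ((j:ℚ) - t - 1) / (3 * t + 1)
      + ((k:ℚ) - t) / (3 * t + 1) = 1 := by
    field_simp
    linarith
  linarith [le_max_right (0:ℚ) (((i : ℚ) - t - 1) / (3 * t + 1)),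
    le_max_right (0:ℚ) (((j : ℚ) - t - 1) / (3 * t + 1)),
    le_max_right (0:ℚ) (((k : ℚ) - t) / (3 * t + 1))]
end

section
/- For n = 3t+2, define r_i = c_i = d_i = max{0, (i−t−1)/(3t+2)} for 1 ≤ i ≤ n. Then for every triple (i,j,k) with i+j+k = 2n+1 and 1 ≤ i,j,k ≤ n, we have r_i + c_j + d_k ≥ 1. -/
/-- Dual feasibility for `n = 3t+2`: with `r_i = c_i = d_i = max{0,(i-t-1)/(3t+2)}`,
every triple `(i,j,k)` with `i+j+k = 2n+1` and `1 ≤ i,j,k ≤ n` satisfies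
`r_i + c_j + d_k ≥ 1`. -/
theorem dual_feasible_two_mod_three (t i j k : ℕ)
    (hi : 1 ≤ i) (hi' : i ≤ 3 * t + 2)
    (hj : 1 ≤ j) (hj' : j ≤ 3 * t + 2)
    (hk : 1 ≤ k) (hk' : k ≤ 3 * t + 2)
    (hsum : i + j + k = 2 * (3 * t + 2) + 1) :
    1 ≤ max 0 (((i : ℚ) - t - 1) / (3 * t + 2)) +
        max 0 (((j : ℚ) - t - 1) / (3 * t + 2)) +
        max 0 (((k : ℚ) - t - 1) / (3 * t + 2)) := by
  have hN : (0:ℚ) < 3 * t + 2 := by positivity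
  have hs : (i:ℚ) + j + k = 2 * (3 * (t:ℚ) + 2) + 1 := by exact_mod_cast hsum
  have mi := le_max_right (0:ℚ) (((i : ℚ) - t - 1) / (3 * t + 2))
  have mj := le_max_right (0:ℚ) (((j : ℚ) - t - 1) / (3 * t + 2))
  have mk := le_max_right (0:ℚ) (((k : ℚ) - t - 1) / (3 * t + 2))
  have mi0 := le_max_left (0:ℚ) (((i : ℚ) - t - 1) / (3 * t + 2))
  have mj0 := le_max_left (0:ℚ) (((j : ℚ) - t - 1) / (3 * t + 2))
  have mk0 := le_max_left (0:ℚ) (((k : ℚ) - t - 1) / (3 * t + 2))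
  by_cases h1 : t + 1 < i
  · by_cases h2 : t + 1 < j
    · by_cases h3 : t + 1 < k
      · have e : (((i : ℚ) - t - 1) + ((j : ℚ) - t - 1) + ((k : ℚ) - t - 1)) / (3 * t + 2)
            = 1 := by
          rw [div_eq_one_iff_eq hN.ne']; linarith
        rw [add_div, add_div] at e
        linarith
      · -- k ≤ t+1, so i, j big
        push_neg at h3
        have hk2 : (k:ℚ) ≤ t + 1 := by exact_mod_cast h3
        have e : (1:ℚ) ≤ (((i : ℚ) - t - 1) + ((j : ℚ) - t - 1)) / (3 * t + 2) := by
          rw [le_div_iff₀ hN]; linarith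
        rw [add_div] at e
        linarith
    · push_neg at h2
      have hj2 : (j:ℚ) ≤ t + 1 := by exact_mod_cast h2
      have h3 : t + 1 < k := by omega
      have e : (1:ℚ) ≤ (((i : ℚ) - t - 1) + ((k : ℚ) - t - 1)) / (3 * t + 2) := by
        rw [le_div_iff₀ hN]; linarith
      rw [add_div] at e
      linarith
  · push_neg at h1
    have hi2 : (i:ℚ) ≤ t + 1 := by exact_mod_cast h1
    have h2 : t + 1 < j := by omega
    have h3 : t + 1 < k := by omega
    have e : (1:ℚ) ≤ (((j : ℚ) - t - 1) + ((k : ℚ) - t - 1)) / (3 * t + 2) := by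
      rw [le_div_iff₀ hN]; linarith
    rw [add_div] at e
    linarith
end

section
/- For n = 3t with t ≥ 1, define r_i = c_i = d_i = max{0, (i−t)/(3t+1)} for 1 ≤ i ≤ n. Then for every triple (i,j,k) with i+j+k = 2n+1 and 1 ≤ i,j,k ≤ n, we have r_i + c_j + d_k ≥ 1. -/
/-- Dual feasibility for `n = 3t`, `t ≥ 1`: with
`r_i = c_i = d_i = max{0,(i-t)/(3t+1)}`, every triple `(i,j,k)` with
`i+j+k = 2n+1` and `1 ≤ i,j,k ≤ n` satisfies `r_i + c_j + d_k ≥ 1`. -/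
theorem dual_feasible_zero_mod_three (t i j k : ℕ) (ht : 1 ≤ t)
    (hi : 1 ≤ i) (hi' : i ≤ 3 * t)
    (hj : 1 ≤ j) (hj' : j ≤ 3 * t)
    (hk : 1 ≤ k) (hk' : k ≤ 3 * t)
    (hsum : i + j + k = 2 * (3 * t) + 1) :
    1 ≤ max 0 (((i : ℚ) - t) / (3 * t + 1)) +
        max 0 (((j : ℚ) - t) / (3 * t + 1)) +
        max 0 (((k : ℚ) - t) / (3 * t + 1)) := by
  have hd : (3 * (t : ℚ) + 1) > 0 := by positivity
  have h1 := le_max_right (0 : ℚ) (((i : ℚ) - t) / (3 * t + 1))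
  have h2 := le_max_right (0 : ℚ) (((j : ℚ) - t) / (3 * t + 1))
  have h3 := le_max_right (0 : ℚ) (((k : ℚ) - t) / (3 * t + 1))
  have hs : ((i : ℚ) - t) / (3 * t + 1) + ((j : ℚ) - t) / (3 * t + 1)
      + ((k : ℚ) - t) / (3 * t + 1) = 1 := by
    have : (i : ℚ) + j + k = 2 * (3 * t) + 1 := by exact_mod_cast congrArg (Nat.cast (R := ℚ)) hsum
    field_simp
    linarith
  linarith
end

section
/- For every positive integer n, N(n) ≤ ⌊(2n+1)/3⌋. -/
open Finset

theorem Finset.sum_range_card_le_sum (s : Finset ℕ) : ∑ i ∈ range #s, i ≤ ∑ x ∈ s, x := by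
  induction s using Finset.induction_on_max with
  | empty => simp
  | insert a s hlt ih =>
    have ha : a ∉ s := fun h => (hlt a h).false
    have hcard : #s ≤ a := by simpa using card_le_card fun x hx => mem_range.2 (hlt x hx)
    rw [card_insert_of_notMem ha, sum_range_succ, sum_insert ha]
    omega

theorem Finset.card_mul_card_sub_one_le_two_mul_sum_of_injOn {α : Type*} {s : Finset α} {f : α → ℕ}
    (hf : Set.InjOn f s) : #s * (#s - 1) ≤ 2 * ∑ x ∈ s, f x := by
  have h := (s.image f).sum_range_card_le_sum
  rw [card_image_of_injOn hf, sum_image hf] at h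
  rw [← sum_range_id_mul_two]
  omega

theorem mem_triangle {n : ℕ} {p : ℕ × ℕ} : p ∈ Triangle n ↔ 1 ≤ p.2 ∧ p.2 ≤ p.1 ∧ p.1 ≤ n := by
  simp only [Triangle, mem_filter, mem_product, mem_Icc]
  omega

namespace NonAttacking

variable {S : Finset (ℕ × ℕ)}

theorem injOn_fst (h : NonAttacking S) : Set.InjOn Prod.fst (S : Set (ℕ × ℕ)) :=
  fun p hp q hq hpq => by_contra fun hne => (h p hp q hq hne).1 hpq

theorem injOn_snd (h : NonAttacking S) : Set.InjOn Prod.snd (S : Set (ℕ × ℕ)) :=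
  fun p hp q hq hpq => by_contra fun hne => (h p hp q hq hne).2.1 hpq

theorem injOn_diag (h : NonAttacking S) :
    Set.InjOn (fun p : ℕ × ℕ => (p.1 : ℤ) - p.2) (S : Set (ℕ × ℕ)) :=
  fun p hp q hq hpq => by_contra fun hne => (h p hp q hq hne).2.2 hpq

/-- Each cell `(a, b)` splits `n - 1` as `(n - a) + (a - b) + (b - 1)`; the three summands take
distinct values along `S`, so each of the three sums over `S` is at least `#S (#S - 1) / 2`. -/
theorem three_mul_card_le {n : ℕ} (hS : S ⊆ Triangle n) (h : NonAttacking S) :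
    3 * #S ≤ 2 * n + 1 := by
  have hcell : ∀ p ∈ S, 1 ≤ p.2 ∧ p.2 ≤ p.1 ∧ p.1 ≤ n := fun p hp => mem_triangle.1 (hS hp)
  have hrows : #S * (#S - 1) ≤ 2 * ∑ p ∈ S, (n - p.1) :=
    card_mul_card_sub_one_le_two_mul_sum_of_injOn fun p hp q hq hpq =>
      h.injOn_fst hp hq (by have := hcell p hp; have := hcell q hq; omega)
  have hdiags : #S * (#S - 1) ≤ 2 * ∑ p ∈ S, (p.1 - p.2) :=
    card_mul_card_sub_one_le_two_mul_sum_of_injOn fun p hp q hq hpq =>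
      h.injOn_diag hp hq (by have := hcell p hp; have := hcell q hq; dsimp only at hpq ⊢; omega)
  have hcols : #S * (#S - 1) ≤ 2 * ∑ p ∈ S, (p.2 - 1) :=
    card_mul_card_sub_one_le_two_mul_sum_of_injOn fun p hp q hq hpq =>
      h.injOn_snd hp hq (by have := hcell p hp; have := hcell q hq; omega)
  have htotal :
      ∑ p ∈ S, (n - p.1) + ∑ p ∈ S, (p.1 - p.2) + ∑ p ∈ S, (p.2 - 1) = #S * (n - 1) := by
    rw [← sum_add_distrib, ← sum_add_distrib, ← smul_eq_mul, ← sum_const]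
    exact sum_congr rfl fun p hp => by have := hcell p hp; omega
  rcases S.eq_empty_or_nonempty with hempty | ⟨p, hp⟩
  · simp [hempty]
  have hn : 1 ≤ n := by have := hcell p hp; omega
  have hk : 3 * (#S - 1) ≤ 2 * (n - 1) :=
    Nat.le_of_mul_le_mul_left (by rw [mul_left_comm, mul_left_comm _ 2]; omega)
      (card_pos.2 ⟨p, hp⟩)
  omega

end NonAttacking

theorem maxDots_upper_bound_general (n : ℕ) :
    maxDots n ≤ (2 * n + 1) / 3 := by
  refine csSup_le' ?_
  rintro _ ⟨S, hS, hNA, rfl⟩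
  rw [Nat.le_div_iff_mul_le three_pos, mul_comm]
  exact hNA.three_mul_card_le hS

/-- `N(n) ≤ ⌊(2n+1)/3⌋` for every positive integer `n`. -/
theorem maxDots_upper_bound (n : ℕ) (hn : 1 ≤ n) :
    maxDots n ≤ (2 * n + 1) / 3 :=
  maxDots_upper_bound_general n
end

section
/- For every positive integer n, N(n) = ⌊(2n+1)/3⌋. -/
/-- Any finset of naturals of cardinality `k` has sum at least `0 + 1 + ⋯ + (k-1)`. -/
lemma sum_card_le : ∀ (k : ℕ) (T : Finset ℕ), T.card = k →
    ∑ i ∈ Finset.range k, i ≤ ∑ x ∈ T, x := by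
  intro k
  induction k with
  | zero => intro T hT; simp
  | succ k ih =>
    intro T hT
    have hne : T.Nonempty := by rw [← Finset.card_pos, hT]; omega
    obtain ⟨a, ha, hmax⟩ := T.exists_max_image id hne
    have hsub : T ⊆ Finset.range (a + 1) := by
      intro x hx
      simp only [Finset.mem_range]
      exact Nat.lt_succ_of_le (hmax x hx)
    have hka : k + 1 ≤ a + 1 := by
      have := Finset.card_le_card hsub
      simp only [Finset.card_range] at this
      omega
    have h1 : (T.erase a).card = k := by rw [Finset.card_erase_of_mem ha, hT]; omega
    have h2 := ih (T.erase a) h1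
    have h3 : ∑ x ∈ T.erase a, x + a = ∑ x ∈ T, x := Finset.sum_erase_add T _ ha
    rw [Finset.sum_range_succ]
    omega

lemma triangle_mem {n : ℕ} {p : ℕ × ℕ} (hp : p ∈ Triangle n) :
    1 ≤ p.2 ∧ p.2 ≤ p.1 ∧ p.1 ≤ n := by
  simp only [Triangle, Finset.mem_filter, Finset.mem_product, Finset.mem_Icc] at hp
  omega

/-- Upper bound: a non-attacking set has at most `(2n+1)/3` cells. -/
lemma upper (n : ℕ) (S : Finset (ℕ × ℕ)) (hS : S ⊆ Triangle n) (hNA : NonAttacking S) :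
    3 * S.card ≤ 2 * n + 1 := by
  rcases Nat.eq_zero_or_pos S.card with h0 | hpos
  · omega
  have hmem : ∀ p ∈ S, 1 ≤ p.2 ∧ p.2 ≤ p.1 ∧ p.1 ≤ n := fun p hp => triangle_mem (hS hp)
  set k := S.card with hk
  -- the three images
  have hAinj : ∀ p ∈ S, ∀ q ∈ S, p.1 = q.1 → p = q := by
    intro p hp q hq h
    by_contra hne
    exact (hNA p hp q hq hne).1 h
  have hBinj : ∀ p ∈ S, ∀ q ∈ S, p.2 = q.2 → p = q := by
    intro p hp q hq h
    by_contra hne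
    exact (hNA p hp q hq hne).2.1 h
  have hDinj : ∀ p ∈ S, ∀ q ∈ S, p.1 - p.2 = q.1 - q.2 → p = q := by
    intro p hp q hq h
    by_contra hne
    have h3 := (hNA p hp q hq hne).2.2
    have h1 := hmem p hp
    have h2 := hmem q hq
    omega
  set A := S.image Prod.fst with hA
  set B := S.image Prod.snd with hB
  set D := S.image (fun p => p.1 - p.2) with hD
  have hAcard : A.card = k := Finset.card_image_of_injOn hAinj
  have hBcard : B.card = k := Finset.card_image_of_injOn hBinj
  have hDcard : D.card = k := Finset.card_image_of_injOn hDinj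
  have hAsum : ∑ x ∈ A, x = ∑ p ∈ S, p.1 := Finset.sum_image hAinj
  have hBsum : ∑ x ∈ B, x = ∑ p ∈ S, p.2 := Finset.sum_image hBinj
  have hDsum : ∑ x ∈ D, x = ∑ p ∈ S, (p.1 - p.2) := Finset.sum_image hDinj
  set G := ∑ i ∈ Finset.range k, i with hG
  -- decomposition of the row sum
  have hsplit : ∑ p ∈ S, p.1 = ∑ p ∈ S, p.2 + ∑ p ∈ S, (p.1 - p.2) := by
    rw [← Finset.sum_add_distrib]
    apply Finset.sum_congr rfl
    intro p hp
    have := hmem p hp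
    omega
  -- lower bound for diagonal sum
  have hDlow : G ≤ ∑ x ∈ D, x := sum_card_le k D hDcard
  -- lower bound for column sum
  have hBlow : G + k ≤ ∑ x ∈ B, x := by
    have hB1 : ∀ x ∈ B, 1 ≤ x := by
      intro x hx
      obtain ⟨p, hp, rfl⟩ := Finset.mem_image.mp hx
      exact (hmem p hp).1
    set B' := B.image (fun x => x - 1) with hB'
    have hinj : ∀ x ∈ B, ∀ y ∈ B, x - 1 = y - 1 → x = y := by
      intro x hx y hy h
      have := hB1 x hx; have := hB1 y hy; omega
    have hcard : B'.card = k := by rw [hB', Finset.card_image_of_injOn hinj, hBcard]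
    have hsum : ∑ x ∈ B', x = ∑ x ∈ B, (x - 1) := Finset.sum_image hinj
    have h1 : G ≤ ∑ x ∈ B', x := sum_card_le k B' hcard
    have h2 : ∑ x ∈ B, x = ∑ x ∈ B, (x - 1) + B.card := by
      rw [Finset.card_eq_sum_ones, ← Finset.sum_add_distrib]
      exact Finset.sum_congr rfl fun x hx => by have := hB1 x hx; omega
    omega
  -- upper bound for row sum
  have hAhigh : ∑ x ∈ A, x + G ≤ k * n := by
    have hA1 : ∀ x ∈ A, x ≤ n := by
      intro x hx
      obtain ⟨p, hp, rfl⟩ := Finset.mem_image.mp hx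
      exact (hmem p hp).2.2
    set A' := A.image (fun x => n - x) with hA'
    have hinj : ∀ x ∈ A, ∀ y ∈ A, n - x = n - y → x = y := by
      intro x hx y hy h
      have := hA1 x hx; have := hA1 y hy; omega
    have hcard : A'.card = k := by rw [hA', Finset.card_image_of_injOn hinj, hAcard]
    have hsum : ∑ x ∈ A', x = ∑ x ∈ A, (n - x) := Finset.sum_image hinj
    have h1 : G ≤ ∑ x ∈ A', x := sum_card_le k A' hcard
    have h2 : ∑ x ∈ A, (n - x) + ∑ x ∈ A, x = k * n := by
      rw [← Finset.sum_add_distrib]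
      have : ∑ _x ∈ A, n = A.card * n := by rw [Finset.sum_const, smul_eq_mul]
      rw [← hAcard, ← this]
      exact Finset.sum_congr rfl fun x hx => by have := hA1 x hx; omega
    omega
  -- combine
  have hG2 : G * 2 = k * (k - 1) := Finset.sum_range_id_mul_two k
  obtain ⟨m, hm⟩ : ∃ m, k = m + 1 := ⟨k - 1, by omega⟩
  have hcomb : 3 * G + k ≤ k * n := by omega
  have hGm : G * 2 = (m + 1) * m := by rw [hG2, hm]; simp
  have h5 : (3 * m + 2) * (m + 1) ≤ 2 * n * (m + 1) := by nlinarith [hcomb, hGm]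
  have h6 := Nat.le_of_mul_le_mul_right h5 (Nat.succ_pos m)
  omega

/-- Build a non-attacking set of size `k` from an explicit placement function. -/
lemma build (n k : ℕ) (f : ℕ → ℕ × ℕ)
    (h1 : ∀ i ∈ Finset.Icc 1 k, 1 ≤ (f i).2 ∧ (f i).2 ≤ (f i).1 ∧ (f i).1 ≤ n)
    (h2 : ∀ i ∈ Finset.Icc 1 k, ∀ j ∈ Finset.Icc 1 k, i ≠ j →
      (f i).1 ≠ (f j).1 ∧ (f i).2 ≠ (f j).2 ∧ (f i).1 - (f i).2 ≠ (f j).1 - (f j).2) :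
    ∃ S : Finset (ℕ × ℕ), S ⊆ Triangle n ∧ NonAttacking S ∧ S.card = k := by
  refine ⟨(Finset.Icc 1 k).image f, ?_, ?_, ?_⟩
  · intro p hp
    obtain ⟨i, hi, rfl⟩ := Finset.mem_image.mp hp
    have := h1 i hi
    simp only [Triangle, Finset.mem_filter, Finset.mem_product, Finset.mem_Icc]
    omega
  · intro p hp q hq hne
    obtain ⟨i, hi, rfl⟩ := Finset.mem_image.mp hp
    obtain ⟨j, hj, rfl⟩ := Finset.mem_image.mp hq
    have hij : i ≠ j := by rintro rfl; exact hne rfl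
    have hb1 := h1 i hi
    have hb2 := h1 j hj
    have := h2 i hi j hj hij
    refine ⟨this.1, this.2.1, ?_⟩
    have := this.2.2
    omega
  · have hinj : ∀ i ∈ Finset.Icc 1 k, ∀ j ∈ Finset.Icc 1 k, f i = f j → i = j := by
      intro i hi j hj h
      by_contra hij
      exact (h2 i hi j hj hij).1 (by rw [h])
    rw [Finset.card_image_of_injOn hinj, Nat.card_Icc]; omega

/-- Lower bound: an explicit non-attacking set of size `(2n+1)/3`. -/
lemma lower (n : ℕ) (hn : 1 ≤ n) :
    ∃ S : Finset (ℕ × ℕ), S ⊆ Triangle n ∧ NonAttacking S ∧ S.card = (2 * n + 1) / 3 := by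
  set m := n / 3 with hm
  rcases (show n % 3 = 0 ∨ n % 3 = 1 ∨ n % 3 = 2 by omega) with hr | hr | hr
  · -- n = 3m, k = 2m
    have hn3 : n = 3 * m := by omega
    have hk : (2 * n + 1) / 3 = 2 * m := by omega
    rw [hk]
    apply build n (2 * m)
      (fun i => (if i ≤ m then m + i - 1 else m + i, if i ≤ m then 2 * i - 1 else 2 * (i - m)))
    · intro i hi
      simp only [Finset.mem_Icc] at hi
      have hm1 : 1 ≤ m := by omega
      split_ifs <;> simp only <;> omega
    · intro i hi j hj hij
      simp only [Finset.mem_Icc] at hi hj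
      split_ifs <;> simp only <;> omega
  · -- n = 3m+1, k = 2m+1
    have hn3 : n = 3 * m + 1 := by omega
    have hk : (2 * n + 1) / 3 = 2 * m + 1 := by omega
    rw [hk]
    apply build n (2 * m + 1)
      (fun i => (m + i, if i ≤ m + 1 then 2 * i - 1 else 2 * (i - m - 1)))
    · intro i hi
      simp only [Finset.mem_Icc] at hi
      split_ifs <;> simp only <;> omega
    · intro i hi j hj hij
      simp only [Finset.mem_Icc] at hi hj
      split_ifs <;> simp only <;> omega
  · -- n = 3m+2, k = 2m+1
    have hn3 : n = 3 * m + 2 := by omega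
    have hk : (2 * n + 1) / 3 = 2 * m + 1 := by omega
    rw [hk]
    apply build n (2 * m + 1)
      (fun i => (m + i, if i ≤ m + 1 then 2 * i - 1 else 2 * (i - m - 1)))
    · intro i hi
      simp only [Finset.mem_Icc] at hi
      split_ifs <;> simp only <;> omega
    · intro i hi j hj hij
      simp only [Finset.mem_Icc] at hi hj
      split_ifs <;> simp only <;> omega

/-- `N(n) = ⌊(2n+1)/3⌋` for every positive integer `n`. -/
theorem maxDots_eq (n : ℕ) (hn : 1 ≤ n) :
    maxDots n = (2 * n + 1) / 3 := by
  obtain ⟨S, hS1, hS2, hS3⟩ := lower n hn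
  have hmem : (2 * n + 1) / 3 ∈
      {m : ℕ | ∃ S : Finset (ℕ × ℕ), S ⊆ Triangle n ∧ NonAttacking S ∧ S.card = m} :=
    ⟨S, hS1, hS2, hS3⟩
  have hub : ∀ x ∈ {m : ℕ | ∃ S : Finset (ℕ × ℕ),
      S ⊆ Triangle n ∧ NonAttacking S ∧ S.card = m}, x ≤ (2 * n + 1) / 3 := by
    rintro x ⟨T, h1, h2, h3⟩
    have := upper n T h1 h2
    omega
  apply le_antisymm
  · exact csSup_le ⟨_, hmem⟩ hub
  · exact le_csSup ⟨_, hub⟩ hmem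
end
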